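/- Let (G,H) be a CSS pair with adapted dual H*, let K be a real number, and let 0 ≤ p ≤ 1. Then the average success probability of maximum-likelihood decoding satisfies P_succ(G,H;K,p) ≥ exp(−[ΔF_e(G,H;K)]_p), where [ΔF_e(G,H;K)]_p is the disorder average of the homological difference. -/
import Mathlib


open Matrix Filter

/-- Partition function `Z_e(G;K)` of the random-bond Ising model in Wegner's form. -/
noncomputable def Zf {ρ : Type*} [Fintype ρ] [DecidableEq ρ] {n : ℕ}
    (G : Matrix ρ (Fin n) (ZMod 2)) (e : Fin n → ZMod 2) (K : ℝ) : ℝ :=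
  ∑ α : ρ → ZMod 2,
    Real.exp (K * ∑ b : Fin n, (-1 : ℝ) ^ ((e b).val + ((Matrix.vecMul α G) b).val))

/-- `Hs` is an adapted dual of `H`: it stacks `G` on top of `k` extra rows, and its
row space equals `C_H^⊥ = {c | H cᵀ = 0}`. -/
def IsAdaptedDual {rG rH k n : ℕ} (G : Matrix (Fin rG) (Fin n) (ZMod 2))
    (H : Matrix (Fin rH) (Fin n) (ZMod 2))
    (Hs : Matrix (Fin rG ⊕ Fin k) (Fin n) (ZMod 2)) : Prop :=
  (∀ i, Hs (Sum.inl i) = G i) ∧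
  LinearMap.range Hs.vecMulLinear = LinearMap.ker H.mulVecLin

/-- Homological difference `ΔF_e(G,H;K) = ln Z_e(H*;K) − ln Z_e(G;K)`. -/
noncomputable def deltaF {ρ ρ' : Type*} [Fintype ρ] [DecidableEq ρ] [Fintype ρ'] [DecidableEq ρ'] {n : ℕ}
    (G : Matrix ρ (Fin n) (ZMod 2)) (Hs : Matrix ρ' (Fin n) (ZMod 2))
    (e : Fin n → ZMod 2) (K : ℝ) : ℝ :=
  Real.log (Zf Hs e K) - Real.log (Zf G e K)

/-- Disorder average `[X_e]_p = Σ_e p^{|e|}(1−p)^{n−|e|} X_e`. -/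
noncomputable def davg {n : ℕ} (p : ℝ) (X : (Fin n → ZMod 2) → ℝ) : ℝ :=
  ∑ e : Fin n → ZMod 2, p ^ hammingNorm e * (1 - p) ^ (n - hammingNorm e) * X e

/-- Average success probability of maximum-likelihood decoding. -/
noncomputable def Psucc {ρ ρ' : Type*} [Fintype ρ] [DecidableEq ρ] [Fintype ρ'] [DecidableEq ρ'] {n : ℕ}
    (G : Matrix ρ (Fin n) (ZMod 2)) (Hs : Matrix ρ' (Fin n) (ZMod 2))
    (K p : ℝ) : ℝ :=
  davg p (fun e => Zf G e K / Zf Hs e K)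

/-- CSS distance `d_G`: minimum Hamming weight of a vector `c` with `H cᵀ = 0`
that is not in the row space of `G`. -/
noncomputable def dCSS {rG rH n : ℕ} (G : Matrix (Fin rG) (Fin n) (ZMod 2))
    (H : Matrix (Fin rH) (Fin n) (ZMod 2)) : ℕ :=
  sInf {w | ∃ c : Fin n → ZMod 2,
    H.mulVec c = 0 ∧ (¬ ∃ α, Matrix.vecMul α G = c) ∧ hammingNorm c = w}


lemma Zf_pos {ρ : Type*} [Fintype ρ] [DecidableEq ρ] {n : ℕ}
    (G : Matrix ρ (Fin n) (ZMod 2)) (e : Fin n → ZMod 2) (K : ℝ) : 0 < Zf G e K :=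
  Finset.sum_pos (fun α _ => Real.exp_pos _) Finset.univ_nonempty

lemma weight_sum_one {n : ℕ} (p : ℝ) :
    ∑ e : Fin n → ZMod 2, p ^ hammingNorm e * (1 - p) ^ (n - hammingNorm e) = 1 := by
  have h : ∀ e : Fin n → ZMod 2,
      p ^ hammingNorm e * (1 - p) ^ (n - hammingNorm e)
        = ∏ b : Fin n, (if e b ≠ 0 then p else 1 - p) := by
    intro e
    rw [Finset.prod_ite, Finset.prod_const, Finset.prod_const]
    have hcard : (Finset.univ.filter fun b => e b ≠ 0).card = hammingNorm e := rfl
    have hcomp : (Finset.univ.filter fun b => ¬ e b ≠ 0).card = n - hammingNorm e := by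
      have := Finset.card_filter_add_card_filter_not (s := (Finset.univ : Finset (Fin n)))
        (p := fun b => e b ≠ 0)
      simp only [Finset.card_univ, Fintype.card_fin] at this
      omega
    rw [hcard, hcomp]
  simp_rw [h]
  rw [← Fintype.prod_sum (κ := fun _ : Fin n => ZMod 2)
    (f := fun _ x => if x ≠ 0 then p else 1 - p)]
  have h1 : (∑ x : ZMod 2, if x ≠ 0 then p else 1 - p) = 1 := by
    rw [show (Finset.univ : Finset (ZMod 2)) = {0, 1} from by decide]
    rw [Finset.sum_insert (by decide), Finset.sum_singleton]
    norm_num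
  have h2 : (∑ x : ZMod 2, if x = 0 then 1 - p else p) = 1 := by simpa [ite_not] using h1
  simp [h2]

/-- Convexity bound: `P_succ(G,H;K,p) ≥ exp(−[ΔF_e(G,H;K)]_p)`. -/
theorem stmt5 {rG rH k n : ℕ} (G : Matrix (Fin rG) (Fin n) (ZMod 2))
    (H : Matrix (Fin rH) (Fin n) (ZMod 2)) (hGH : G * Hᵀ = 0)
    (hk : k = n - G.rank - H.rank)
    (Hs : Matrix (Fin rG ⊕ Fin k) (Fin n) (ZMod 2))
    (hHs : IsAdaptedDual G H Hs) (K p : ℝ) (hp0 : 0 ≤ p) (hp1 : p ≤ 1) :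
    Psucc G Hs K p ≥ Real.exp (-(davg p (fun e => deltaF G Hs e K))) := by
  set w : (Fin n → ZMod 2) → ℝ := fun e => p ^ hammingNorm e * (1 - p) ^ (n - hammingNorm e)
    with hw
  have hw0 : ∀ e, 0 ≤ w e := fun e =>
    mul_nonneg (pow_nonneg hp0 _) (pow_nonneg (by linarith) _)
  have hw1 : ∑ e : Fin n → ZMod 2, w e = 1 := weight_sum_one p
  have key : Real.exp (∑ e : Fin n → ZMod 2, w e • (- deltaF G Hs e K)) ≤
      ∑ e : Fin n → ZMod 2, w e • Real.exp (- deltaF G Hs e K) :=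
    convexOn_exp.map_sum_le (fun i _ => hw0 i) hw1 (fun i _ => Set.mem_univ _)
  have heq : ∀ e, Real.exp (- deltaF G Hs e K) = Zf G e K / Zf Hs e K := by
    intro e
    rw [deltaF, neg_sub, Real.exp_sub, Real.exp_log (Zf_pos G e K),
      Real.exp_log (Zf_pos Hs e K)]
  have hneg : -(davg p (fun e => deltaF G Hs e K)) =
      ∑ e : Fin n → ZMod 2, w e • (- deltaF G Hs e K) := by
    simp only [davg, smul_eq_mul, mul_neg, ← Finset.sum_neg_distrib, hw]
  rw [ge_iff_le, hneg]
  refine key.trans_eq ?_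
  simp only [Psucc, davg, smul_eq_mul, heq, hw]
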